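/- arXiv:1702.01374 — 2 statements merged into one kernel-verified Lean document; each statement's English description precedes it below -/
import Mathlib

section
/- For every integer h ≥ 3 and rational x, the polynomials P_h(x, z) := Σ_{n=0}^{h-1} C(x+n-h, n) · C(h-1, n) / C(2h-1, n) · (-z)^n satisfy the recurrence P_h(x,z) = (1 - c_h z)·P_{h-1}(x,z) - a_h z²·P_{h-2}(x,z), where c_h = -(1 + 2(h-2)h - x)/((2h-1)(2h-3)) and a_h = -(x-h+2)(x+h-1)/(4(2h-3)²). -/
/-- Generalized binomial coefficient `C(x, k) = x(x-1)⋯(x-k+1)/k!` for rational `x`. -/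
noncomputable def gchoose (x : ℚ) (k : ℕ) : ℚ :=
  (∏ i ∈ Finset.range k, (x - i)) / (Nat.factorial k)

/-- The numerator convergent polynomial
`P_h(x, z) = Σ_{n=0}^{h-1} C(x+n-h, n) C(h-1, n) / C(2h-1, n) · (-z)^n`. -/
noncomputable def Ppoly (x : ℚ) (h : ℕ) : Polynomial ℚ :=
  ∑ n ∈ Finset.range h,
    Polynomial.C (gchoose (x + n - h) n * gchoose ((h : ℚ) - 1) n / gchoose (2 * (h : ℚ) - 1) n) *
      (-Polynomial.X) ^ n

noncomputable def fprod (z : ℚ) (n : ℕ) : ℚ := ∏ i ∈ Finset.range n, (z - i)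

lemma gchoose_eq (z : ℚ) (n : ℕ) : gchoose z n = fprod z n / (Nat.factorial n) := rfl

lemma fprod_succ (z : ℚ) (n : ℕ) : fprod z (n+1) = fprod z n * (z - n) :=
  Finset.prod_range_succ _ _

lemma fprod_succ' (z : ℚ) (n : ℕ) : fprod z (n+1) = z * fprod (z-1) n := by
  unfold fprod
  rw [Finset.prod_range_succ']
  simp only [Nat.cast_zero, sub_zero]
  rw [mul_comm]
  congr 1
  apply Finset.prod_congr rfl
  intro i _
  push_cast
  ring

lemma fprod_pos (m n : ℕ) (h : n ≤ m) : 0 < fprod (m:ℚ) n := by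
  apply Finset.prod_pos
  intro i hi
  have hi' : i < n := Finset.mem_range.mp hi
  have : i < m := lt_of_lt_of_le hi' h
  have : (i:ℚ) < m := by exact_mod_cast this
  linarith

lemma coeff_Ppoly (x : ℚ) (h k : ℕ) : (Ppoly x h).coeff k =
    if k < h then
      (-1)^k * (gchoose (x + k - h) k * gchoose ((h:ℚ)-1) k / gchoose (2*(h:ℚ)-1) k)
    else 0 := by
  unfold Ppoly
  rw [Polynomial.finset_sum_coeff]
  simp only [show (-Polynomial.X : Polynomial ℚ) = Polynomial.C (-1) * Polynomial.X from by simp,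
    mul_pow, ← Polynomial.C_pow, ← Polynomial.C_mul, Polynomial.coeff_C_mul, Polynomial.coeff_X_pow]
  simp only [mul_ite, mul_one, mul_zero, Finset.sum_ite_eq, Finset.mem_range]
  split <;> ring

lemma gchoose_zero (z : ℚ) : gchoose z 0 = 1 := by simp [gchoose]

lemma gchoose_one (z : ℚ) : gchoose z 1 = z := by simp [gchoose]

lemma val_tail2 (z : ℚ) (j : ℕ) :
    gchoose z (j+2) = fprod z j * (z - j) * (z - (j+1)) / (Nat.factorial (j+2)) := by
  rw [gchoose_eq, show j+2 = (j+1)+1 from rfl, fprod_succ, fprod_succ]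
  push_cast; ring

lemma val_tail1 (z : ℚ) (j : ℕ) :
    gchoose z (j+1) = fprod z j * (z - j) / (Nat.factorial (j+1)) := by
  rw [gchoose_eq, fprod_succ]

lemma val_front2 (z : ℚ) (j : ℕ) :
    gchoose z (j+2) = z * (z-1) * fprod (z-2) j / (Nat.factorial (j+2)) := by
  rw [gchoose_eq, show j+2 = (j+1)+1 from rfl, fprod_succ', fprod_succ',
    show z-1-1 = z-2 from by ring]
  ring

lemma val_mix2 (z : ℚ) (j : ℕ) :
    gchoose z (j+2) = z * fprod (z-1) j * (z - 1 - j) / (Nat.factorial (j+2)) := by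
  rw [gchoose_eq, show j+2 = (j+1)+1 from rfl, fprod_succ', fprod_succ]
  ring

lemma val_front1 (z : ℚ) (j : ℕ) :
    gchoose z (j+1) = z * fprod (z-1) j / (Nat.factorial (j+1)) := by
  rw [gchoose_eq, fprod_succ']

lemma fr1 (a b c e Mm : ℚ) (hb : b ≠ 0) (he : e ≠ 0) :
    Mm * (a/b*(c/b)/(e/b)) = Mm*a*c/(b*e) := by
  field_simp

lemma fr3 (q r a b c e Mm : ℚ) (hb : b ≠ 0) (he : e ≠ 0) (hr : r ≠ 0) :
    q/r * (Mm * (a/b*(c/b)/(e/b))) = q*Mm*a*c/(r*(b*e)) := by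
  field_simp

lemma fr4 (q r a b c e g Mm : ℚ) (hb : b ≠ 0) (he : e ≠ 0) (hr : r ≠ 0) :
    q/r * (Mm * (a/b*(c/b)/(e/g/b))) = q*Mm*a*c*g/(r*(b*e)) := by
  field_simp

set_option maxHeartbeats 2000000 in
lemma key (j t : ℕ) (x : ℚ) :
    (-1) ^ (j + 2) *
      (gchoose (x + ↑(j + 2) - ↑(j + t + 3)) (j + 2) * gchoose ((↑(j + t + 3):ℚ) - 1) (j + 2) /
        gchoose (2 * (↑(j + t + 3):ℚ) - 1) (j + 2)) =
    ((-1) ^ (j + 2) *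
        (gchoose (x + ↑(j + 2) - ↑(j + t + 2)) (j + 2) * gchoose ((↑(j + t + 2):ℚ) - 1) (j + 2) /
          gchoose (2 * (↑(j + t + 2):ℚ) - 1) (j + 2)) -
      -(1 + 2 * ((↑(j + t + 3):ℚ) - 2) * ↑(j + t + 3) - x) /
          ((2 * (↑(j + t + 3):ℚ) - 1) * (2 * (↑(j + t + 3):ℚ) - 3)) *
        ((-1) ^ (j + 1) *
          (gchoose (x + ↑(j + 1) - ↑(j + t + 2)) (j + 1) * gchoose ((↑(j + t + 2):ℚ) - 1) (j + 1) /
            gchoose (2 * (↑(j + t + 2):ℚ) - 1) (j + 1)))) -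
    -(x - ↑(j + t + 3) + 2) * (x + ↑(j + t + 3) - 1) / (4 * (2 * (↑(j + t + 3):ℚ) - 3) ^ 2) *
      ((-1) ^ j *
        (gchoose (x + ↑j - ↑(j + t + 1)) j * gchoose ((↑(j + t + 1):ℚ) - 1) j /
          gchoose (2 * (↑(j + t + 1):ℚ) - 1) j)) := by
  push_cast
  rw [show x + ((j:ℚ) + 2) - ((j:ℚ) + ↑t + 3) = x - ↑t - 1 from by ring,
    show ((j:ℚ) + ↑t + 3 - 1) = (j:ℚ) + ↑t + 2 from by ring,
    show 2 * ((j:ℚ) + ↑t + 3) - 1 = 2*(j:ℚ) + 2*↑t + 5 from by ring,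
    show x + ((j:ℚ) + 2) - ((j:ℚ) + ↑t + 2) = x - ↑t from by ring,
    show ((j:ℚ) + ↑t + 2 - 1) = (j:ℚ) + ↑t + 1 from by ring,
    show 2 * ((j:ℚ) + ↑t + 2) - 1 = 2*(j:ℚ) + 2*↑t + 3 from by ring,
    show x + ((j:ℚ) + 1) - ((j:ℚ) + ↑t + 2) = x - ↑t - 1 from by ring,
    show x + (j:ℚ) - ((j:ℚ) + ↑t + 1) = x - ↑t - 1 from by ring,
    show ((j:ℚ) + ↑t + 1 - 1) = (j:ℚ) + ↑t from by ring,
    show 2 * ((j:ℚ) + ↑t + 1) - 1 = 2*(j:ℚ) + 2*↑t + 1 from by ring,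
    show 2 * ((j:ℚ) + ↑t + 3) - 3 = 2*(j:ℚ) + 2*↑t + 3 from by ring]
  rw [val_tail2 (x - ↑t - 1) j, val_front2 ((j:ℚ) + ↑t + 2) j,
    val_front2 (2*(j:ℚ) + 2*↑t + 5) j, val_mix2 (x - ↑t) j,
    val_mix2 ((j:ℚ) + ↑t + 1) j, val_tail2 (2*(j:ℚ) + 2*↑t + 3) j,
    val_tail1 (x - ↑t - 1) j, val_front1 ((j:ℚ) + ↑t + 1) j,
    val_tail1 (2*(j:ℚ) + 2*↑t + 3) j, gchoose_eq (x - ↑t - 1) j,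
    gchoose_eq ((j:ℚ) + ↑t) j, gchoose_eq (2*(j:ℚ) + 2*↑t + 1) j]
  rw [show (j:ℚ) + ↑t + 2 - 2 = (j:ℚ) + ↑t from by ring,
    show 2*(j:ℚ) + 2*↑t + 5 - 2 = 2*(j:ℚ) + 2*↑t + 3 from by ring,
    show (j:ℚ) + ↑t + 1 - 1 = (j:ℚ) + ↑t from by ring]
  have hden1 : (2*(j:ℚ) + 2*↑t + 3) ≠ 0 := by positivity
  have hden2 : (2*(j:ℚ) + 2*↑t + 2) ≠ 0 := by positivity
  have hden5 : (2*(j:ℚ) + 2*↑t + 5) ≠ 0 := by positivity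
  have e1 : fprod (2*(j:ℚ) + 2*↑t + 3) (j+2)
      = (2*(j:ℚ) + 2*↑t + 3) * ((2*(j:ℚ) + 2*↑t + 3 - 1) * fprod (2*(j:ℚ) + 2*↑t + 3 - 1 - 1) j) := by
    rw [show j+2 = (j+1)+1 from rfl, fprod_succ', fprod_succ']
  have e2 : fprod (2*(j:ℚ) + 2*↑t + 3) (j+2)
      = fprod (2*(j:ℚ) + 2*↑t + 3) j * (2*(j:ℚ) + 2*↑t + 3 - ↑j) * (2*(j:ℚ) + 2*↑t + 3 - ↑(j+1)) := by
    rw [show j+2 = (j+1)+1 from rfl, fprod_succ, fprod_succ]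
  rw [show 2*(j:ℚ) + 2*↑t + 3 - 1 - 1 = 2*(j:ℚ) + 2*↑t + 1 from by ring] at e1
  have hD0eq : fprod (2*(j:ℚ) + 2*↑t + 1) j
      = fprod (2*(j:ℚ) + 2*↑t + 3) j * ((j:ℚ) + 2*↑t + 3) * ((j:ℚ) + 2*↑t + 2)
        / ((2*(j:ℚ) + 2*↑t + 3) * (2*(j:ℚ) + 2*↑t + 2)) := by
    rw [eq_div_iff (mul_ne_zero hden1 hden2)]
    have e3 := e1.symm.trans e2
    push_cast at e3
    linear_combination e3
  rw [hD0eq]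
  have hV : fprod (2*(j:ℚ) + 2*↑t + 3) j ≠ 0 := by
    have harg : (2*(j:ℚ) + 2*↑t + 3) = ((2*j + 2*t + 3 : ℕ) : ℚ) := by push_cast; ring
    rw [harg]
    exact ne_of_gt (fprod_pos _ _ (by omega))
  have hf0 : ((Nat.factorial j : ℚ)) ≠ 0 := by exact_mod_cast (Nat.factorial_ne_zero j)
  have hf1 : ((Nat.factorial (j+1) : ℚ)) ≠ 0 := by exact_mod_cast (Nat.factorial_ne_zero (j+1))
  have hf2 : ((Nat.factorial (j+2) : ℚ)) ≠ 0 := by exact_mod_cast (Nat.factorial_ne_zero (j+2))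
  have hfact2 : ((Nat.factorial (j+2) : ℚ)) = (↑j+2) * (↑j+1) * (Nat.factorial j : ℚ) := by
    rw [show j+2 = (j+1)+1 from rfl, Nat.factorial_succ, Nat.factorial_succ]
    push_cast; ring
  have hfact1 : ((Nat.factorial (j+1) : ℚ)) = (↑j+1) * (Nat.factorial j : ℚ) := by
    rw [Nat.factorial_succ]; push_cast; ring
  rw [hfact2, hfact1]
  have hj1 : ((j:ℚ)+1) ≠ 0 := by positivity
  have hj2 : ((j:ℚ)+2) ≠ 0 := by positivity
  have hG4 : (2*(j:ℚ) + 2*↑t + 4) ≠ 0 := by positivity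
  have hK3 : ((j:ℚ) + 2*↑t + 3) ≠ 0 := by positivity
  have hK2 : ((j:ℚ) + 2*↑t + 2) ≠ 0 := by positivity
  set F := (Nat.factorial j : ℚ) with hF
  set J := (j:ℚ) with hJ
  set T := (t:ℚ) with hT
  set P0 := fprod (x - T - 1) j with hP0
  set S0 := fprod (J + T) j with hS0
  set V := fprod (2*J + 2*T + 3) j with hVd
  set M := ((-1:ℚ)) ^ j with hM
  rw [pow_add, pow_add, ← hM]
  norm_num
  have hb2 : ((J + 2) * (J + 1) * F) ≠ 0 := mul_ne_zero (mul_ne_zero hj2 hj1) hf0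
  have hb1 : ((J + 1) * F) ≠ 0 := mul_ne_zero hj1 hf0
  have he1 : ((2 * J + 2 * T + 5) * (2 * J + 2 * T + 5 - 1) * V) ≠ 0 := by
    refine mul_ne_zero (mul_ne_zero hden5 ?_) hV
    intro hcon; apply hG4; linarith [hcon]
  have he2 : (V * (2 * J + 2 * T + 3 - J) * (2 * J + 2 * T + 3 - (J + 1))) ≠ 0 := by
    refine mul_ne_zero (mul_ne_zero hV ?_) ?_ <;> intro hcon
    · apply hK3; linarith [hcon]
    · apply hK2; linarith [hcon]
  have he3 : (V * (2 * J + 2 * T + 3 - J)) ≠ 0 := by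
    refine mul_ne_zero hV ?_
    intro hcon; apply hK3; linarith [hcon]
  have he4 : (V * (J + 2 * T + 3) * (J + 2 * T + 2)) ≠ 0 :=
    mul_ne_zero (mul_ne_zero hV hK3) hK2
  have hg4 : ((2 * J + 2 * T + 3) * (2 * J + 2 * T + 2)) ≠ 0 := mul_ne_zero hden1 hden2
  have hr3 : ((2 * J + 2 * T + 5) * (2 * J + 2 * T + 3)) ≠ 0 := mul_ne_zero hden5 hden1
  have hr4 : (4 * (2 * J + 2 * T + 3) ^ 2) ≠ 0 :=
    mul_ne_zero (by norm_num) (pow_ne_zero _ hden1)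
  rw [fr1 _ _ _ _ _ hb2 he1, fr1 _ _ _ _ _ hb2 he2, fr3 _ _ _ _ _ _ _ hb1 he3 hr3,
    fr4 _ _ _ _ _ _ _ _ hf0 he4 hr4]
  have he3' : ((2 * J + 2 * T + 5) * (2 * J + 2 * T + 3) * ((J + 1) * F * (V * (2 * J + 2 * T + 3 - J)))) ≠ 0 :=
    mul_ne_zero hr3 (mul_ne_zero hb1 he3)
  have he4' : (4 * (2 * J + 2 * T + 3) ^ 2 * (F * (V * (J + 2 * T + 3) * (J + 2 * T + 2)))) ≠ 0 :=
    mul_ne_zero hr4 (mul_ne_zero hf0 he4)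
  rw [div_add_div _ _ (mul_ne_zero hb2 he2) he3',
    div_sub_div _ _ (mul_ne_zero (mul_ne_zero hb2 he2) he3') he4',
    div_eq_div_iff (mul_ne_zero hb2 he1)
      (mul_ne_zero (mul_ne_zero (mul_ne_zero hb2 he2) he3') he4')]
  ring

theorem stmt7 (h : ℕ) (hh : 3 ≤ h) (x : ℚ) :
    Ppoly x h =
      (1 - Polynomial.C (-(1 + 2 * ((h : ℚ) - 2) * (h : ℚ) - x) /
          ((2 * (h : ℚ) - 1) * (2 * (h : ℚ) - 3))) * Polynomial.X) * Ppoly x (h - 1) -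
        Polynomial.C (-(x - (h : ℚ) + 2) * (x + (h : ℚ) - 1) / (4 * (2 * (h : ℚ) - 3) ^ 2)) *
          Polynomial.X ^ 2 * Ppoly x (h - 2) := by
  obtain ⟨m, rfl⟩ : ∃ m, h = m + 3 := ⟨h - 3, by omega⟩
  ext k
  rw [show m + 3 - 1 = m + 2 from rfl, show m + 3 - 2 = m + 1 from rfl]
  rw [sub_mul, one_mul, Polynomial.coeff_sub, Polynomial.coeff_sub,
    mul_assoc (Polynomial.C _) Polynomial.X, Polynomial.coeff_C_mul,
    mul_assoc (Polynomial.C _) (Polynomial.X^2), Polynomial.coeff_C_mul]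
  match k with
  | 0 =>
    simp only [Polynomial.mul_coeff_zero, Polynomial.coeff_X_zero, zero_mul, mul_zero,
      sub_zero]
    rw [coeff_Ppoly, coeff_Ppoly]
    rw [if_pos (by omega), if_pos (by omega)]
    simp [gchoose_zero]
  | 1 =>
    have h20 : (Polynomial.X^2 * Ppoly x (m+1)).coeff 1 = 0 := by
      rw [mul_comm, Polynomial.coeff_mul_X_pow']; norm_num
    rw [Polynomial.coeff_X_mul, h20]
    rw [coeff_Ppoly, coeff_Ppoly, coeff_Ppoly]
    rw [if_pos (by omega), if_pos (by omega), if_pos (by omega)]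
    simp only [gchoose_zero, gchoose_one]
    push_cast
    rw [show 2*((m:ℚ)+3)-1 = 2*(m:ℚ)+5 from by ring,
        show 2*((m:ℚ)+3)-3 = 2*(m:ℚ)+3 from by ring,
        show 2*((m:ℚ)+2)-1 = 2*(m:ℚ)+3 from by ring]
    have h1 : (2*(m:ℚ)+5) ≠ 0 := by positivity
    have h2 : (2*(m:ℚ)+3) ≠ 0 := by positivity
    field_simp
    ring
  | (j+2) =>
    have hxm : (Polynomial.X * Ppoly x (m+2)).coeff (j+2) = (Ppoly x (m+2)).coeff (j+1) :=
      Polynomial.coeff_X_mul _ (j+1)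
    have hxm2 : (Polynomial.X^2 * Ppoly x (m+1)).coeff (j+2) = (Ppoly x (m+1)).coeff j := by
      rw [mul_comm, Polynomial.coeff_mul_X_pow']; norm_num
    rw [hxm, hxm2]
    rw [coeff_Ppoly, coeff_Ppoly, coeff_Ppoly, coeff_Ppoly]
    by_cases hjm : j + 2 < m + 3
    · obtain ⟨t, rfl⟩ : ∃ t, m = j + t := ⟨m - j, by omega⟩
      rw [if_pos (show j+2 < j+t+3 by omega), if_pos (show j+1 < j+t+2 by omega),
        if_pos (show j < j+t+1 by omega)]
      rcases t with _ | s
      · rw [if_neg (by omega)]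
        have K := key j 0 x
        rw [K]
        have hz : gchoose ((↑(j + 0 + 2):ℚ) - 1) (j + 2) = 0 := by
          rw [gchoose_eq, show j+2 = (j+1)+1 from rfl, fprod_succ]
          rw [show ((↑(j + 0 + 2):ℚ) - 1 - ↑(j+1)) = 0 from by push_cast; ring,
            mul_zero, zero_div]
        rw [hz]
        ring
      · rw [if_pos (by omega)]
        exact key j (s+1) x
    · rw [if_neg (by omega), if_neg (by omega), if_neg (by omega), if_neg (by omega)]
      ring
end

section
/- For all integers p ≥ 0, q ≥ 0 and rational x: C(x, p+q) = C(x, p)·C(x, q) + Σ_{i=1}^{min(p,q)} (-1)^i · (C(x+i, i)·C(x, i)·C(2i, i)²) / (2·C(2i-1, i-1)²) · C(x-i, p-i)·C(x-i, q-i) / (C(p+i, i)·C(q+i, i)), and in particular for p = q = 1: C(x, 2) = C(x,1)² - (x+1)x·2²/(2·1)·(1/(2·2)) = x² - x(x+1)/2. -/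
open Finset

theorem gchoose_eq_ringChoose (x : ℚ) (k : ℕ) : gchoose x k = Ring.choose x k := by
  rw [gchoose, Ring.choose_eq_smul, ← Polynomial.aeval_eq_smeval,
    ← Polynomial.eval_map_algebraMap, descPochhammer_map, descPochhammer_eval_eq_prod_range,
    smul_eq_mul, div_eq_inv_mul]

theorem gchoose_zero_right (x : ℚ) : gchoose x 0 = 1 := by
  simp [gchoose]

theorem gchoose_natCast (n k : ℕ) : gchoose n k = n.choose k := by
  rw [gchoose_eq_ringChoose, Ring.choose_natCast]

theorem gchoose_natCast_ne_zero {n k : ℕ} (h : k ≤ n) : gchoose n k ≠ 0 := by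
  rw [gchoose_natCast]
  exact_mod_cast (Nat.choose_pos h).ne'

theorem gchoose_succ_right_eq (y : ℚ) (n : ℕ) :
    gchoose y (n + 1) * (n + 1) = gchoose y n * (y - n) := by
  simp only [gchoose, prod_range_succ, Nat.factorial_succ, Nat.cast_mul, Nat.cast_succ]
  field_simp

theorem gchoose_succ_right_eq_sub_one (y : ℚ) (n : ℕ) :
    gchoose y (n + 1) * (n + 1) = gchoose (y - 1) n * y := by
  simp only [gchoose, prod_range_succ', Nat.factorial_succ, Nat.cast_mul, Nat.cast_succ]
  simp only [sub_sub, add_comm (1 : ℚ)]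
  field_simp
  ring

theorem gchoose_mul_choose (x : ℚ) {n k : ℕ} (h : k ≤ n) :
    gchoose x n * n.choose k = gchoose x k * gchoose (x - k) (n - k) := by
  simp only [gchoose_eq_ringChoose, ← Ring.choose_smul_choose x h, nsmul_eq_mul, mul_comm]

theorem gchoose_two_mul {i : ℕ} (hi : 1 ≤ i) :
    gchoose (2 * i) i = 2 * gchoose (2 * i - 1) (i - 1) := by
  obtain ⟨n, rfl⟩ : ∃ n, i = n + 1 := ⟨i - 1, by omega⟩
  have h := gchoose_succ_right_eq_sub_one (2 * (n + 1 : ℕ)) n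
  have hn : (n : ℚ) + 1 ≠ 0 := by positivity
  simp only [Nat.add_sub_cancel]
  apply mul_right_cancel₀ hn
  push_cast at h ⊢
  linear_combination h

theorem gchoose_two_eq (x : ℚ) : gchoose x 2 = x ^ 2 - x * (x + 1) / 2 := by
  simp only [gchoose, prod_range_succ, prod_range_zero, Nat.factorial]
  ring

@[fun_prop]
theorem continuous_gchoose (k : ℕ) : Continuous fun x => gchoose x k := by
  unfold gchoose
  fun_prop

noncomputable def gchooseInt (x : ℚ) (n : ℤ) : ℚ := if 0 ≤ n then gchoose x n.toNat else 0

@[simp]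
theorem gchooseInt_natCast (x : ℚ) (n : ℕ) : gchooseInt x n = gchoose x n := by
  simp [gchooseInt]

theorem gchooseInt_of_neg (x : ℚ) {n : ℤ} (h : n < 0) : gchooseInt x n = 0 := by
  simp [gchooseInt, h.not_ge]

theorem gchooseInt_natCast_of_lt {n : ℕ} {m : ℤ} (h : n < m) : gchooseInt n m = 0 := by
  lift m to ℕ using (by omega)
  rw [gchooseInt_natCast, gchoose_natCast, Nat.choose_eq_zero_of_lt (by omega), Nat.cast_zero]

theorem gchooseInt_natCast_symm (n : ℕ) (m : ℤ) : gchooseInt n (n - m) = gchooseInt n m := by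
  rcases lt_or_ge m 0 with h | h
  · rw [gchooseInt_natCast_of_lt (by omega), gchooseInt_of_neg _ h]
  rcases lt_or_ge (n : ℤ) m with h' | h'
  · rw [gchooseInt_natCast_of_lt h', gchooseInt_of_neg _ (by omega)]
  lift m to ℕ using h
  rw [show (n : ℤ) - m = ((n - m : ℕ) : ℤ) by omega, gchooseInt_natCast, gchooseInt_natCast,
    gchoose_natCast, gchoose_natCast, Nat.choose_symm (by omega)]

theorem gchooseInt_add_one_right_eq (y : ℚ) (n : ℤ) :
    gchooseInt y (n + 1) * (n + 1) = gchooseInt y n * (y - n) := by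
  rcases lt_trichotomy n (-1) with h | rfl | h
  · rw [gchooseInt_of_neg _ (by omega : n + 1 < 0), gchooseInt_of_neg _ (by omega : n < 0)]; ring
  · rw [gchooseInt_of_neg _ (by norm_num : (-1 : ℤ) < 0)]; push_cast; ring
  · lift n to ℕ using (by omega)
    exact_mod_cast gchoose_succ_right_eq y n

theorem gchooseInt_add_one_right_eq_sub_one (y : ℚ) (n : ℤ) :
    gchooseInt y (n + 1) * (n + 1) = gchooseInt (y - 1) n * y := by
  rcases lt_trichotomy n (-1) with h | rfl | h
  · rw [gchooseInt_of_neg _ (by omega : n + 1 < 0), gchooseInt_of_neg _ (by omega : n < 0)]; ring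
  · rw [gchooseInt_of_neg _ (by norm_num : (-1 : ℤ) < 0)]; push_cast; ring
  · lift n to ℕ using (by omega)
    exact_mod_cast gchoose_succ_right_eq_sub_one y n

theorem gchooseInt_add_one_left (y : ℚ) (n : ℤ) :
    gchooseInt (y + 1) n = gchooseInt y n + gchooseInt y (n - 1) := by
  rcases lt_trichotomy n 0 with h | rfl | h
  · simp only [gchooseInt_of_neg _ h, gchooseInt_of_neg _ (show n - 1 < 0 by omega), add_zero]
  · simp [gchooseInt, gchoose]
  · obtain ⟨m, rfl⟩ : ∃ m : ℕ, n = m + 1 := ⟨(n - 1).toNat, by omega⟩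
    rw [add_sub_cancel_right, show (m : ℤ) + 1 = ((m + 1 : ℕ) : ℤ) by push_cast; ring]
    simp only [gchooseInt_natCast, gchoose_eq_ringChoose, Ring.choose_succ_succ, add_comm]

@[fun_prop]
theorem continuous_gchooseInt (n : ℤ) : Continuous fun x => gchooseInt x n := by
  unfold gchooseInt
  split_ifs <;> fun_prop

theorem Finset.sum_Icc_int_sub {M : Type*} [AddCommGroup M] (f : ℤ → M) {a b : ℤ}
    (h : a ≤ b + 1) :
    ∑ k ∈ Icc a b, (f (k + 1) - f k) = f (b + 1) - f a := by
  obtain ⟨n, rfl⟩ : ∃ n : ℕ, b = a + n - 1 := ⟨(b + 1 - a).toNat, by omega⟩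
  induction n with
  | zero => simp
  | succ n ih =>
    rw [show a + (n + 1 : ℕ) - 1 = a + n - 1 + 1 by push_cast; ring,
      ← insert_Icc_right_eq_Icc_add_one (by omega), sum_insert (by simp), ih (by omega)]
    abel

theorem Finset.sum_Icc_neg_natCast {M : Type*} [AddCommMonoid M] (f : ℤ → M) (m : ℕ) :
    ∑ k ∈ Icc (-(m : ℤ)) m, f k = f 0 + ∑ i ∈ Icc 1 m, (f i + f (-i)) := by
  induction m with
  | zero => simp
  | succ m ih =>
    have hIcc : Icc (-((m + 1 : ℕ) : ℤ)) (m + 1 : ℕ) =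
        insert (-((m + 1 : ℕ) : ℤ)) (insert ((m + 1 : ℕ) : ℤ) (Icc (-(m : ℤ)) m)) := by
      ext k; simp only [mem_Icc, mem_insert]; omega
    rw [hIcc, sum_insert (by simp only [mem_insert, mem_Icc]; omega), sum_insert (by simp), ih,
      sum_Icc_succ_top (by omega)]
    abel

theorem Nat.choose_sub_mul_choose_add {p i : ℕ} (q : ℕ) (hip : i ≤ p) :
    (p + q).choose (p - i) * (q + i).choose i = (p + q).choose p * p.choose i := by
  rw [Nat.choose_symm_of_eq_add (show p + q = (p - i) + (q + i) by omega),
    Nat.choose_mul (by omega), Nat.choose_mul hip, Nat.add_sub_cancel,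
    Nat.choose_symm_of_eq_add (show p + q - i = q + (p - i) by omega)]

namespace LowerIndexReduction

variable (p q : ℕ) (x : ℚ)

noncomputable def term (k : ℤ) : ℚ :=
  (-1) ^ k * gchooseInt (p + q : ℕ) (p - k) * gchooseInt (x + k) (p + k) *
    gchooseInt (x - k) (q - k)

noncomputable def cert (k : ℤ) : ℚ :=
  (-1) ^ k * (k - x - 1) * (k + p) * gchooseInt (p + q : ℕ) (p - k) * gchooseInt (x + k) (p + k) *
    gchooseInt (x - k) (q + 1 - k)

theorem term_succ_eq (k : ℤ) :
    2 * (q + 1) * (x - q) * term p (q + 1) x k =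
      2 * (x - p - q) * (x - q) * term p q x k + (cert p q x (k + 1) - cert p q x k) := by
  have h1 := gchooseInt_add_one_right_eq_sub_one (x + k + 1) (p + k)
  have h2 := gchooseInt_add_one_right_eq_sub_one (x - k) (q - k)
  have h3 := gchooseInt_add_one_right_eq (x - k) (q - k)
  have h4 := gchooseInt_add_one_left (p + q : ℕ) (p - k)
  have h5 := gchooseInt_add_one_right_eq (p + q : ℕ) (p - k - 1)
  have hs : (-1 : ℚ) ^ (k + 1) = -(-1) ^ k := by
    rw [zpow_add_one₀ (by norm_num)]; ring
  simp only [add_sub_cancel_right, sub_add_cancel, sub_add_eq_add_sub] at h1 h2 h3 h5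
  unfold term cert
  push_cast at h1 h2 h3 h4 h5 ⊢
  simp only [add_sub_add_right_eq_sub]
  simp only [← add_assoc, ← sub_sub, hs, h4]
  linear_combination (-1) ^ k *
    ((k - x) * gchooseInt (p + q) (p - k - 1) * gchooseInt (x - k - 1) (q - k) * h1
      + (x + k + 1) * gchooseInt (p + q) (p - k - 1) * gchooseInt (x + k) (p + k) * h2
      + 2 * (x - p - q) * gchooseInt (p + q) (p - k) * gchooseInt (x + k) (p + k) * h3
      - (k + x - 2 * q - 1) * gchooseInt (x + k) (p + k) * gchooseInt (x - k) (q + 1 - k) * h5)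

theorem term_eq_zero {k : ℤ} (hk : (min p q : ℤ) < |k|) : term p q x k = 0 := by
  have hcases : (p : ℤ) < k ∨ k < -(q : ℤ) ∨ (q : ℤ) < k ∨ k < -(p : ℤ) := by
    rcases abs_cases k with ⟨h, -⟩ | ⟨h, -⟩ <;> omega
  unfold term
  rcases hcases with h | h | h | h
  · rw [gchooseInt_of_neg _ (by omega : (p : ℤ) - k < 0)]; ring
  · rw [gchooseInt_natCast_of_lt (by push_cast; omega : ((p + q : ℕ) : ℤ) < p - k)]; ring
  · rw [gchooseInt_of_neg _ (by omega : (q : ℤ) - k < 0)]; ring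
  · rw [gchooseInt_of_neg _ (by omega : (p : ℤ) + k < 0)]; ring

theorem term_neg (k : ℤ) : term p q x (-k) = term q p x k := by
  have hsign : (-1 : ℚ) ^ (-k) = (-1) ^ k := by rw [zpow_neg, ← inv_zpow, inv_neg_one]
  have hsymm : gchooseInt (p + q : ℕ) (p + k) = gchooseInt (q + p : ℕ) (q - k) := by
    rw [add_comm q p, ← gchooseInt_natCast_symm]
    congr 1; push_cast; ring
  simp only [term, hsign, Int.cast_neg, sub_neg_eq_add, ← sub_eq_add_neg, hsymm]
  ring

theorem term_zero :
    term p q x 0 = (p + q).choose p * (gchoose x p * gchoose x q) := by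
  simp only [term, zpow_zero, Int.cast_zero, add_zero, sub_zero, one_mul, gchooseInt_natCast,
    gchoose_natCast]
  ring

theorem term_natCast_mul {i : ℕ} (hip : i ≤ p) (hiq : i ≤ q) :
    term p q x i * (gchoose ((p : ℚ) + i) i * gchoose ((q : ℚ) + i) i) =
      (p + q).choose p * ((-1) ^ i * gchoose (x + i) i * gchoose x i *
        gchoose (x - i) (p - i) * gchoose (x - i) (q - i)) := by
  have hC : ((p + q).choose (p - i) * (q + i).choose i : ℚ) = (p + q).choose p * p.choose i := by
    exact_mod_cast Nat.choose_sub_mul_choose_add q hip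
  have hA := gchoose_mul_choose (x + i) (show i ≤ p + i by omega)
  have hB := gchoose_mul_choose x hip
  rw [add_sub_cancel_right, Nat.add_sub_cancel] at hA
  have hP : gchoose ((p : ℚ) + i) i = (p + i).choose i := by
    exact_mod_cast gchoose_natCast (p + i) i
  have hQ : gchoose ((q : ℚ) + i) i = (q + i).choose i := by
    exact_mod_cast gchoose_natCast (q + i) i
  rw [term, zpow_natCast, show (p : ℤ) - i = ((p - i : ℕ) : ℤ) by omega,
    show (p : ℤ) + i = ((p + i : ℕ) : ℤ) by omega,
    show (q : ℤ) - i = ((q - i : ℕ) : ℤ) by omega]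
  simp only [gchooseInt_natCast, gchoose_natCast, Int.cast_natCast, hP, hQ]
  linear_combination ((-1) ^ i * gchoose (x - i) (q - i)) *
    (gchoose (x + i) (p + i) * (p + i).choose i * hC +
      (p + q).choose p * (p.choose i * hA + gchoose (x + i) i * hB))

noncomputable def termSum : ℚ := ∑ k ∈ Icc (-(p : ℤ)) q, term p q x k

theorem termSum_succ :
    2 * (q + 1) * (x - q) * termSum p (q + 1) x = 2 * (x - p - q) * (x - q) * termSum p q x := by
  have hext : termSum p q x = ∑ k ∈ Icc (-(p : ℤ)) (q + 1), term p q x k := by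
    rw [termSum, ← insert_Icc_right_eq_Icc_add_one (by omega), sum_insert (by simp),
      term_eq_zero p q x (by rw [abs_of_nonneg (by omega)]; omega), zero_add]
  have htel : ∑ k ∈ Icc (-(p : ℤ)) (q + 1), (cert p q x (k + 1) - cert p q x k) = 0 := by
    have htop : cert p q x (q + 1 + 1) = 0 := by
      rw [cert, gchooseInt_of_neg _ (by omega : (q : ℤ) + 1 - (q + 1 + 1) < 0)]; ring
    have hbot : cert p q x (-p) = 0 := by simp [cert]
    rw [sum_Icc_int_sub _ (by omega), htop, hbot, sub_zero]
  calc 2 * (q + 1) * (x - q) * termSum p (q + 1) x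
      = ∑ k ∈ Icc (-(p : ℤ)) (q + 1), 2 * (q + 1) * (x - q) * term p (q + 1) x k := by
        rw [termSum, mul_sum, Nat.cast_succ]
    _ = ∑ k ∈ Icc (-(p : ℤ)) (q + 1),
          (2 * (x - p - q) * (x - q) * term p q x k + (cert p q x (k + 1) - cert p q x k)) :=
        sum_congr rfl fun k _ => term_succ_eq p q x k
    _ = 2 * (x - p - q) * (x - q) * termSum p q x := by
        rw [sum_add_distrib, htel, add_zero, ← mul_sum, ← hext]

theorem termSum_eq_of_ne (hx : x ≠ q)
    (ih : termSum p q x = gchoose x p * gchoose (x - p) q) :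
    termSum p (q + 1) x = gchoose x p * gchoose (x - p) (q + 1) := by
  have hne : 2 * ((q : ℚ) + 1) * (x - q) ≠ 0 := by
    have : x - q ≠ 0 := sub_ne_zero.mpr hx
    positivity
  apply mul_left_cancel₀ hne
  rw [termSum_succ, ih]
  linear_combination (-2 * (x - q) * gchoose x p) * gchoose_succ_right_eq (x - p) q

theorem continuous_termSum : Continuous (termSum p q) := by
  unfold termSum term
  fun_prop

theorem termSum_eq : termSum p q x = gchoose x p * gchoose (x - p) q := by
  induction q generalizing x with
  | zero =>
    rw [termSum, sum_eq_single 0 (fun k _ hk => term_eq_zero p 0 x (by simpa using hk)) (by simp),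
      term_zero]
    simp [gchoose_zero_right]
  | succ q ih =>
    -- `termSum_eq_of_ne` misses only `x = q`, and both sides are continuous in `x`.
    have h := (continuous_termSum p (q + 1)).ext_on (dense_compl_singleton (q : ℚ)) (by fun_prop)
      fun y hy => termSum_eq_of_ne p q y hy (ih y)
    exact congrFun h x

theorem termSum_eq_sum_pairs :
    termSum p q x = term p q x 0 + ∑ i ∈ Icc 1 (min p q), (term p q x i + term q p x i) := by
  have hsub : Icc (-(min p q : ℕ) : ℤ) (min p q : ℕ) ⊆ Icc (-(p : ℤ)) q := by
    intro k; simp only [mem_Icc]; omega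
  have hzero : ∀ k ∈ Icc (-(p : ℤ)) q, k ∉ Icc (-(min p q : ℕ) : ℤ) (min p q : ℕ) →
      term p q x k = 0 := fun k _ hk =>
    term_eq_zero p q x (by simp only [mem_Icc] at hk; rw [lt_abs]; omega)
  rw [termSum, ← sum_subset hsub hzero, sum_Icc_neg_natCast]
  simp only [term_neg]

theorem choose_mul_summand {i : ℕ} (hi : 1 ≤ i) (hip : i ≤ p) (hiq : i ≤ q) :
    (p + q).choose p * ((-1 : ℚ) ^ i *
        (gchoose (x + i) i * gchoose x i * (gchoose (2 * (i : ℚ)) i) ^ 2) /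
        (2 * (gchoose (2 * (i : ℚ) - 1) (i - 1)) ^ 2) *
        (gchoose (x - i) (p - i) * gchoose (x - i) (q - i)) /
        (gchoose ((p : ℚ) + i) i * gchoose ((q : ℚ) + i) i)) = term p q x i + term q p x i := by
  have hd : gchoose (2 * (i : ℚ) - 1) (i - 1) ≠ 0 := by
    rw [show 2 * (i : ℚ) - 1 = ((2 * i - 1 : ℕ) : ℚ) by
      push_cast [show 1 ≤ 2 * i by omega]; ring]
    exact gchoose_natCast_ne_zero (by omega)
  have hP : gchoose ((p : ℚ) + i) i ≠ 0 := by
    exact_mod_cast gchoose_natCast_ne_zero (n := p + i) (by omega)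
  have hQ : gchoose ((q : ℚ) + i) i ≠ 0 := by
    exact_mod_cast gchoose_natCast_ne_zero (n := q + i) (by omega)
  have h1 := term_natCast_mul p q x hip hiq
  have h2 := term_natCast_mul q p x hiq hip
  rw [Nat.choose_symm_add, Nat.add_comm q p] at h2
  rw [gchoose_two_mul hi]
  generalize gchoose (2 * (i : ℚ) - 1) (i - 1) = d at hd ⊢
  field_simp
  linear_combination -h1 - h2

end LowerIndexReduction

open LowerIndexReduction

theorem stmt16 (p q : ℕ) (x : ℚ) :
    (gchoose x (p + q) = gchoose x p * gchoose x q +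
      ∑ i ∈ Finset.Icc 1 (min p q), (-1 : ℚ) ^ i *
        (gchoose (x + i) i * gchoose x i * (gchoose (2 * (i : ℚ)) i) ^ 2) /
        (2 * (gchoose (2 * (i : ℚ) - 1) (i - 1)) ^ 2) *
        (gchoose (x - i) (p - i) * gchoose (x - i) (q - i)) /
        (gchoose ((p : ℚ) + i) i * gchoose ((q : ℚ) + i) i)) ∧
    gchoose x 2 = x ^ 2 - x * (x + 1) / 2 := by
  refine ⟨?_, gchoose_two_eq x⟩
  have hC : ((p + q).choose p : ℚ) ≠ 0 := by exact_mod_cast (Nat.choose_pos (by omega)).ne'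
  apply mul_left_cancel₀ hC
  have hsplit := gchoose_mul_choose x (Nat.le_add_right p q)
  rw [Nat.add_sub_cancel_left] at hsplit
  rw [mul_comm, hsplit, ← termSum_eq, termSum_eq_sum_pairs, term_zero, mul_add, mul_sum]
  congr 1
  refine sum_congr rfl fun i hi => ?_
  rw [mem_Icc] at hi
  exact (choose_mul_summand p q x hi.1 (by omega) (by omega)).symm
end
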